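/- Let A be a C*-algebra equipped with an action of a finite group Γ. Then the map sending a ∈ A to Σ_{γ∈Γ} γ(a) ⊗ e_γ and sending γ ∈ Γ to 1 ⊗ ρ(γ) extends to a *-isomorphism from the crossed product A ⋊ Γ onto the fixed-point algebra (A ⊗ 𝔎(ℓ²Γ))^{Γ,λ}, where Γ acts diagonally via its action on A and the conjugation action λ coming from the left regular representation on 𝔎(ℓ²Γ). -/

import Mathlib

/-!
STATEMENT 4 (Rieffel's isomorphism): Let `A` be a C*-algebra with an action
`α` of a finite group `Γ` by *-automorphisms.  Realizing the crossed product
`A ⋊ Γ` concretely as the space of functions `Γ → A` with the twisted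
convolution product and involution, and `A ⊗ 𝔎(ℓ²Γ)` as `Γ × Γ` matrices
over `A`, the map `a ↦ Σ_γ γ(a) ⊗ e_γ`, `γ ↦ 1 ⊗ ρ(γ)` becomes the map
`Φ(f)(γ₁, γ₂) = α_{γ₁}(f(γ₁⁻¹γ₂))`.  The theorem asserts that `Φ` is a
*-isomorphism from `A ⋊ Γ` onto the fixed-point algebra
`(A ⊗ 𝔎(ℓ²Γ))^{Γ,λ}` for the diagonal action combining `α` with conjugation
by the left regular representation.
-/

section
variable {Γ A : Type} [Group Γ] [Fintype Γ] [DecidableEq Γ]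
  [NonUnitalNormedRing A] [StarRing A] [CStarRing A]
  [NormedSpace ℂ A] [StarModule ℂ A]
  (α : Γ → (A ≃⋆ₐ[ℂ] A))

/-- twisted convolution product on the crossed product `A ⋊ Γ` -/
noncomputable def crossedMul (f g : Γ → A) : Γ → A :=
  fun γ => ∑ η : Γ, f η * α η (g (η⁻¹ * γ))

/-- involution on the crossed product `A ⋊ Γ` -/
def crossedStar (f : Γ → A) : Γ → A :=
  fun γ => α γ (star (f γ⁻¹))

/-- Rieffel's map `A ⋊ Γ → A ⊗ 𝔎(ℓ²Γ)` -/
def rieffelMap (f : Γ → A) : Matrix Γ Γ A :=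
  fun γ₁ γ₂ => α γ₁ (f (γ₁⁻¹ * γ₂))

set_option linter.unusedSectionVars false

/-
`Φ(f)` is determined by its first row, `Φ(f)(1, γ) = α₁(f γ)`, and the fixed-point
condition says exactly that each row `γ₁` is `α_{γ₁}` applied to the first row, shifted by `γ₁`.
The homomorphism identities are reindexings of finite sums over `Γ` by left translation.
-/

theorem rieffelMap_injective : Function.Injective (rieffelMap α) := by
  intro f g h
  funext γ
  simpa [rieffelMap] using congrFun (congrFun h 1) γ

theorem rieffelMap_add (f g : Γ → A) :
    rieffelMap α (f + g) = rieffelMap α f + rieffelMap α g := by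
  ext γ₁ γ₂
  simp [rieffelMap]

theorem rieffelMap_smul (z : ℂ) (f : Γ → A) : rieffelMap α (z • f) = z • rieffelMap α f := by
  ext γ₁ γ₂
  simp [rieffelMap]

theorem rieffelMap_single_one (a : A) :
    rieffelMap α (fun γ => if γ = 1 then a else 0) = Matrix.diagonal fun γ => α γ a := by
  ext γ₁ γ₂
  by_cases h : γ₁ = γ₂ <;> simp [rieffelMap, inv_mul_eq_one, h]

variable {α}

theorem rieffelMap_apply_inv_mul (hα : ∀ (g h : Γ) (a : A), α (g * h) a = α g (α h a))
    (f : Γ → A) (γ γ₁ γ₂ : Γ) :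
    α γ (rieffelMap α f (γ⁻¹ * γ₁) (γ⁻¹ * γ₂)) = rieffelMap α f γ₁ γ₂ := by
  simp only [rieffelMap, ← hα, mul_inv_rev, inv_inv, mul_inv_cancel_left, mul_assoc]

theorem eq_rieffelMap_of_invariant {M : Matrix Γ Γ A}
    (hM : ∀ γ γ₁ γ₂ : Γ, α γ (M (γ⁻¹ * γ₁) (γ⁻¹ * γ₂)) = M γ₁ γ₂) :
    rieffelMap α (M 1) = M := by
  ext γ₁ γ₂
  simpa [rieffelMap] using hM γ₁ γ₁ γ₂

theorem range_rieffelMap (hα : ∀ (g h : Γ) (a : A), α (g * h) a = α g (α h a)) :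
    Set.range (rieffelMap α) =
      {M : Matrix Γ Γ A | ∀ γ γ₁ γ₂ : Γ, α γ (M (γ⁻¹ * γ₁) (γ⁻¹ * γ₂)) = M γ₁ γ₂} := by
  ext M
  constructor
  · rintro ⟨f, rfl⟩
    exact rieffelMap_apply_inv_mul hα f
  · intro hM
    exact ⟨M 1, eq_rieffelMap_of_invariant hM⟩

theorem rieffelMap_crossedMul (hα : ∀ (g h : Γ) (a : A), α (g * h) a = α g (α h a))
    (f g : Γ → A) :
    rieffelMap α (crossedMul α f g) = rieffelMap α f * rieffelMap α g := by
  ext γ₁ γ₂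
  simp only [rieffelMap, crossedMul, Matrix.mul_apply, map_sum]
  refine Fintype.sum_equiv (Equiv.mulLeft γ₁) _ _ fun η => ?_
  simp only [Equiv.coe_mulLeft, map_mul, ← hα, inv_mul_cancel_left, mul_inv_rev, mul_assoc]

theorem rieffelMap_crossedStar (hα : ∀ (g h : Γ) (a : A), α (g * h) a = α g (α h a))
    (f : Γ → A) :
    rieffelMap α (crossedStar α f) = (rieffelMap α f).conjTranspose := by
  ext γ₁ γ₂
  simp only [rieffelMap, crossedStar, Matrix.conjTranspose_apply, ← map_star, ← hα,
    mul_inv_rev, inv_inv, mul_inv_cancel_left]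

variable (α)

theorem rieffel_isomorphism
    (hα_mul : ∀ (g h : Γ) (a : A), α (g * h) a = α g (α h a)) :
    -- `Φ` is injective
    Function.Injective (rieffelMap α) ∧
    -- the range of `Φ` is the fixed-point algebra of the diagonal action
    Set.range (rieffelMap α) =
      {M : Matrix Γ Γ A | ∀ γ γ₁ γ₂ : Γ,
        α γ (M (γ⁻¹ * γ₁) (γ⁻¹ * γ₂)) = M γ₁ γ₂} ∧
    -- `Φ` is an algebra *-homomorphism for the crossed product operations
    (∀ f g : Γ → A, rieffelMap α (crossedMul α f g) =
      rieffelMap α f * rieffelMap α g) ∧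
    (∀ f : Γ → A, rieffelMap α (crossedStar α f) = (rieffelMap α f).conjTranspose) ∧
    (∀ f g : Γ → A, rieffelMap α (f + g) = rieffelMap α f + rieffelMap α g) ∧
    (∀ (z : ℂ) (f : Γ → A), rieffelMap α (z • f) = z • rieffelMap α f) ∧
    -- on `A` it is the map `a ↦ Σ_γ γ(a) ⊗ e_γ`
    (∀ a : A, rieffelMap α (fun γ => if γ = 1 then a else 0) =
      Matrix.diagonal fun γ => α γ a) :=
  ⟨rieffelMap_injective α, range_rieffelMap hα_mul, rieffelMap_crossedMul hα_mul,
    rieffelMap_crossedStar hα_mul, rieffelMap_add α, rieffelMap_smul α, rieffelMap_single_one α⟩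

end
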